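/- For α, β > -1, k ≥ 1, any C^k function f on (0,π), and θ ∈ (0,π), the higher-order derivative admits the factorization D^{(k)} f(θ) = Ψ^{α,β}(θ) (sin θ)^k ((1/sin θ) d/dθ)^k ( f(θ)/Ψ^{α,β}(θ) ), where D^{(k)} = D_{α+k-1,β+k-1} ∘ ⋯ ∘ D_{α,β} and Ψ^{α,β}(θ) = (sin(θ/2))^{α+1/2}(cos(θ/2))^{β+1/2}. -/

import Mathlib

open Real MeasureTheory Set

/-- Classical Jacobi polynomial (Szegő normalization), via the explicit sum. -/
noncomputable def jacobiP (α β : ℝ) (n : ℕ) (x : ℝ) : ℝ :=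
  (Real.Gamma (α + n + 1) / ((Nat.factorial n : ℝ) * Real.Gamma (α + β + n + 1))) *
    ∑ m ∈ Finset.range (n + 1),
      (Nat.choose n m : ℝ) * (Real.Gamma (α + β + n + m + 1) / Real.Gamma (α + m + 1)) *
        ((x - 1) / 2) ^ m

/-- Ψ^{α,β}(θ) = (sin(θ/2))^{α+1/2} (cos(θ/2))^{β+1/2}. -/
noncomputable def psiF (α β θ : ℝ) : ℝ :=
  Real.sin (θ / 2) ^ (α + 1/2) * Real.cos (θ / 2) ^ (β + 1/2)

/-- Normalizing constant making φ_n^{α,β} of unit L²(0,π)-norm. -/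
noncomputable def jacobiC (α β : ℝ) (n : ℕ) : ℝ :=
  (Real.sqrt (∫ θ in Set.Ioo (0:ℝ) Real.pi,
    (psiF α β θ * jacobiP α β n (Real.cos θ)) ^ 2))⁻¹

/-- Jacobi trigonometric function φ_n^{α,β}. -/
noncomputable def phiF (α β : ℝ) (n : ℕ) (θ : ℝ) : ℝ :=
  psiF α β θ * jacobiC α β n * jacobiP α β n (Real.cos θ)

/-- First order Jacobi derivative D_{α,β}. -/
noncomputable def jacobiD (α β : ℝ) (f : ℝ → ℝ) (θ : ℝ) : ℝ :=
  deriv f θ - ((2*α+1)/4) * (Real.cos (θ/2) / Real.sin (θ/2)) * f θ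
    + ((2*β+1)/4) * Real.tan (θ/2) * f θ

/-- Formal adjoint D_{α,β}* = D_{α,β} - 2 d/dθ. -/
noncomputable def jacobiDStar (α β : ℝ) (f : ℝ → ℝ) (θ : ℝ) : ℝ :=
  jacobiD α β f θ - 2 * deriv f θ

/-- Higher order derivative D^{(k)} = D_{α+k-1,β+k-1} ∘ ⋯ ∘ D_{α,β}. -/
noncomputable def jacobiDk (α β : ℝ) : ℕ → (ℝ → ℝ) → ℝ → ℝ
  | 0 => fun f => f
  | (k+1) => fun f => jacobiD (α + k) (β + k) (jacobiDk α β k f)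

/-- Adjoint higher order derivative (D^{(k)})* = D_{α,β}* ∘ ⋯ ∘ D_{α+k-1,β+k-1}*. -/
noncomputable def jacobiDkStar (α β : ℝ) : ℕ → (ℝ → ℝ) → ℝ → ℝ
  | 0 => fun f => f
  | (k+1) => fun f => jacobiDStar α β (jacobiDkStar (α+1) (β+1) k f)

/-- The operator g ↦ g'/sin θ. -/
noncomputable def sinD (g : ℝ → ℝ) : ℝ → ℝ := fun θ => deriv g θ / Real.sin θ

/-!
The weight Ψ^{γ,δ} is an integrating factor for D_{γ,δ}: its logarithmic derivative is
((2γ+1)/4) cot(θ/2) - ((2δ+1)/4) tan(θ/2), so D_{γ,δ}(Ψ^{γ,δ} u) = Ψ^{γ,δ} u'. Since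
sin θ = 2 sin(θ/2) cos(θ/2), raising both parameters by k turns Ψ^{α,β} (sin θ)^k into
2^k Ψ^{α+k,β+k}. Hence if D^{(k)} f = Ψ^{α,β} (sin θ)^k g, then
D^{(k+1)} f = D_{α+k,β+k}(2^k Ψ^{α+k,β+k} g) = 2^k Ψ^{α+k,β+k} g'
  = Ψ^{α,β} (sin θ)^{k+1} (g' / sin θ),
and the factorization follows by induction on k.
-/

open Topology

lemma sin_half_pos_of_mem_Ioo {θ : ℝ} (hθ : θ ∈ Ioo 0 π) : 0 < sin (θ / 2) :=
  sin_pos_of_pos_of_lt_pi (by linarith [hθ.1]) (by linarith [hθ.2, pi_pos])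

lemma cos_half_pos_of_mem_Ioo {θ : ℝ} (hθ : θ ∈ Ioo 0 π) : 0 < cos (θ / 2) :=
  cos_pos_of_mem_Ioo ⟨by linarith [hθ.1, pi_pos], by linarith [hθ.2]⟩

lemma psiF_pos {α β θ : ℝ} (hθ : θ ∈ Ioo 0 π) : 0 < psiF α β θ :=
  mul_pos (rpow_pos_of_pos (sin_half_pos_of_mem_Ioo hθ) _)
    (rpow_pos_of_pos (cos_half_pos_of_mem_Ioo hθ) _)

lemma contDiffOn_psiF (α β : ℝ) {n : WithTop ℕ∞} :
    ContDiffOn ℝ n (psiF α β) (Ioo 0 π) := by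
  intro θ hθ
  have hsin : ContDiff ℝ n fun t : ℝ => sin (t / 2) :=
    contDiff_sin.comp (contDiff_id.div_const 2)
  have hcos : ContDiff ℝ n fun t : ℝ => cos (t / 2) :=
    contDiff_cos.comp (contDiff_id.div_const 2)
  exact ((hsin.contDiffAt.rpow_const_of_ne (sin_half_pos_of_mem_Ioo hθ).ne').mul
    (hcos.contDiffAt.rpow_const_of_ne (cos_half_pos_of_mem_Ioo hθ).ne')).contDiffWithinAt

lemma hasDerivAt_psiF (γ δ : ℝ) {θ : ℝ} (hθ : θ ∈ Ioo 0 π) :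
    HasDerivAt (psiF γ δ)
      (psiF γ δ θ * ((2 * γ + 1) / 4 * (cos (θ / 2) / sin (θ / 2))
        - (2 * δ + 1) / 4 * tan (θ / 2))) θ := by
  have hs := sin_half_pos_of_mem_Ioo hθ
  have hc := cos_half_pos_of_mem_Ioo hθ
  have hhalf : HasDerivAt (fun t : ℝ => t / 2) (1 / 2) θ := by
    simpa using (hasDerivAt_id θ).div_const 2
  have hsin :=
    ((hasDerivAt_sin (θ / 2)).comp θ hhalf).rpow_const (p := γ + 1 / 2) (Or.inl hs.ne')
  have hcos :=
    ((hasDerivAt_cos (θ / 2)).comp θ hhalf).rpow_const (p := δ + 1 / 2) (Or.inl hc.ne')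
  refine (hsin.mul hcos).congr_deriv ?_
  simp only [Function.comp_def, psiF, tan_eq_sin_div_cos, rpow_sub hs, rpow_sub hc, rpow_one]
  field_simp
  ring

lemma jacobiD_psiF_mul (γ δ : ℝ) {θ : ℝ} (hθ : θ ∈ Ioo 0 π) {u : ℝ → ℝ}
    (hu : DifferentiableAt ℝ u θ) :
    jacobiD γ δ (fun t => psiF γ δ t * u t) θ = psiF γ δ θ * deriv u θ := by
  rw [jacobiD, show (fun t => psiF γ δ t * u t) = psiF γ δ * u from rfl,
    ((hasDerivAt_psiF γ δ hθ).mul hu.hasDerivAt).deriv]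
  ring

lemma Filter.EventuallyEq.jacobiD_eq {γ δ θ : ℝ} {f g : ℝ → ℝ} (h : f =ᶠ[𝓝 θ] g) :
    jacobiD γ δ f θ = jacobiD γ δ g θ := by
  rw [jacobiD, jacobiD, h.deriv_eq, h.eq_of_nhds]

lemma psiF_mul_sin_pow (α β : ℝ) (k : ℕ) {θ : ℝ} (hθ : θ ∈ Ioo 0 π) :
    psiF α β θ * sin θ ^ k = 2 ^ k * psiF (α + k) (β + k) θ := by
  have hs := sin_half_pos_of_mem_Ioo hθ
  have hc := cos_half_pos_of_mem_Ioo hθ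
  have hsin : sin θ = 2 * sin (θ / 2) * cos (θ / 2) := by
    rw [← sin_two_mul, mul_div_cancel₀ θ two_ne_zero]
  rw [hsin, psiF, psiF, add_right_comm α, add_right_comm β,
    rpow_add hs _ (k : ℝ), rpow_add hc _ (k : ℝ), rpow_natCast, rpow_natCast]
  ring

lemma contDiffOn_sinD_iterate {s : Set ℝ} (hs : IsOpen s) (hsin : ∀ x ∈ s, sin x ≠ 0)
    {n : ℕ} {u : ℝ → ℝ} :
    ∀ k : ℕ, ContDiffOn ℝ (n + k : ℕ) u s → ContDiffOn ℝ n (sinD^[k] u) s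
  | 0, hu => hu
  | k + 1, hu => by
    rw [Function.iterate_succ_apply']
    have hk : ContDiffOn ℝ (n + 1 : ℕ) (sinD^[k] u) s :=
      contDiffOn_sinD_iterate hs hsin k (by rwa [add_right_comm])
    exact (hk.deriv_of_isOpen hs (by norm_cast)).div contDiff_sin.contDiffOn hsin

lemma jacobiDk_succ_apply_eq {α β θ : ℝ} (hθ : θ ∈ Ioo 0 π) {k : ℕ} {f g : ℝ → ℝ}
    (hg : DifferentiableAt ℝ g θ)
    (hfk : jacobiDk α β k f =ᶠ[𝓝 θ] fun t => psiF α β t * sin t ^ k * g t) :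
    jacobiDk α β (k + 1) f θ = psiF α β θ * sin θ ^ (k + 1) * sinD g θ := by
  have hshift :
      jacobiDk α β k f =ᶠ[𝓝 θ] fun t => psiF (α + k) (β + k) t * (2 ^ k * g t) := by
    filter_upwards [hfk, isOpen_Ioo.mem_nhds hθ] with t ht ht'
    rw [ht, psiF_mul_sin_pow α β k ht']
    ring
  have hsinθ : sin θ ≠ 0 := (sin_pos_of_mem_Ioo hθ).ne'
  change jacobiD (α + k) (β + k) (jacobiDk α β k f) θ = _
  rw [hshift.jacobiD_eq, jacobiD_psiF_mul _ _ hθ (hg.const_mul _), deriv_const_mul _ hg,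
    sinD, pow_succ, ← mul_assoc (psiF α β θ), psiF_mul_sin_pow α β k hθ]
  field_simp

theorem jacobiDk_factorization_general (α β : ℝ) (k : ℕ)
    (f : ℝ → ℝ) (hf : ContDiffOn ℝ k f (Set.Ioo (0:ℝ) Real.pi)) :
    ∀ θ ∈ Set.Ioo (0:ℝ) Real.pi,
      jacobiDk α β k f θ
        = psiF α β θ * Real.sin θ ^ k * (sinD^[k] (fun t => f t / psiF α β t)) θ := by
  induction k with
  | zero =>
    intro θ hθ
    simp [jacobiDk, mul_div_cancel₀ _ (psiF_pos hθ).ne']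
  | succ k ih =>
    intro θ hθ
    have hg : ContDiffOn ℝ (1 : ℕ) (sinD^[k] fun t => f t / psiF α β t) (Ioo 0 π) :=
      contDiffOn_sinD_iterate isOpen_Ioo (fun x hx => (sin_pos_of_mem_Ioo hx).ne') k <| by
        rw [add_comm]; exact hf.div (contDiffOn_psiF α β) fun t ht => (psiF_pos ht).ne'
    rw [Function.iterate_succ_apply']
    exact jacobiDk_succ_apply_eq hθ
      ((hg.differentiableOn one_ne_zero).differentiableAt (isOpen_Ioo.mem_nhds hθ))
      (Filter.eventually_of_mem (isOpen_Ioo.mem_nhds hθ) (ih (hf.of_le (by norm_cast; omega))))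

theorem jacobiDk_factorization (α β : ℝ) (hα : -1 < α) (hβ : -1 < β) (k : ℕ) (hk : 1 ≤ k)
    (f : ℝ → ℝ) (hf : ContDiffOn ℝ k f (Set.Ioo (0:ℝ) Real.pi)) :
    ∀ θ ∈ Set.Ioo (0:ℝ) Real.pi,
      jacobiDk α β k f θ
        = psiF α β θ * Real.sin θ ^ k * (sinD^[k] (fun t => f t / psiF α β t)) θ :=
  jacobiDk_factorization_general α β k f hf
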